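/- arXiv:1405.0422 — 6 statements merged into one kernel-verified Lean document; each statement's English description precedes it below -/
import Mathlib

section
/- Let G ⊆ O(V) preserve the inner product and let u ∈ End(V). Among all factorizations u = x·s with x ∈ G and s ∈ 𝔤^⊥, the squared distance ‖u − x‖² equals tr(uᵀu) − 2·tr(s) + n; hence the factorization with the largest value of tr(s) yields the x ∈ G closest to u among critical points. -/
open ContinuousLinearMap in
lemma my_trace_adjoint {n : ℕ} (T : EuclideanSpace ℝ (Fin n) →L[ℝ] EuclideanSpace ℝ (Fin n)) :
    LinearMap.trace ℝ (EuclideanSpace ℝ (Fin n)) (adjoint T : _ →L[ℝ] _) =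
    LinearMap.trace ℝ (EuclideanSpace ℝ (Fin n)) T := by
  have h : ((adjoint T : _ →L[ℝ] _) : EuclideanSpace ℝ (Fin n) →ₗ[ℝ] EuclideanSpace ℝ (Fin n))
      = LinearMap.adjoint (T : EuclideanSpace ℝ (Fin n) →ₗ[ℝ] EuclideanSpace ℝ (Fin n)) := rfl
  rw [h]
  let b := EuclideanSpace.basisFun (Fin n) ℝ
  rw [LinearMap.trace_eq_matrix_trace ℝ b.toBasis, LinearMap.trace_eq_matrix_trace ℝ b.toBasis,
    LinearMap.toMatrix_adjoint]
  simp [Matrix.trace_conjTranspose]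

open ContinuousLinearMap in
lemma my_key {n : ℕ} (x s : EuclideanSpace ℝ (Fin n) →L[ℝ] EuclideanSpace ℝ (Fin n))
    (hx : adjoint x ∘L x = 1) :
    LinearMap.trace ℝ (EuclideanSpace ℝ (Fin n))
      (adjoint (x ∘L s - x) ∘L (x ∘L s - x) : _ →L[ℝ] _) =
    LinearMap.trace ℝ (EuclideanSpace ℝ (Fin n))
      (adjoint (x ∘L s) ∘L (x ∘L s) : _ →L[ℝ] _)
    - 2 * LinearMap.trace ℝ (EuclideanSpace ℝ (Fin n)) s + (n : ℝ) := by
  have e1 : adjoint (x ∘L s) ∘L x = adjoint s := by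
    rw [adjoint_comp, comp_assoc, hx]; exact mul_one _
  have e2 : adjoint x ∘L (x ∘L s) = s := by
    rw [← comp_assoc, hx]; exact one_mul _
  have expand : adjoint (x ∘L s - x) ∘L (x ∘L s - x)
      = adjoint (x ∘L s) ∘L (x ∘L s) - adjoint s - (s - 1) := by
    rw [map_sub, sub_comp, comp_sub, comp_sub, e1, e2, hx]
  rw [expand]
  simp only [ContinuousLinearMap.coe_sub, map_sub, my_trace_adjoint]
  have hone : LinearMap.trace ℝ (EuclideanSpace ℝ (Fin n))
      ((1 : EuclideanSpace ℝ (Fin n) →L[ℝ] EuclideanSpace ℝ (Fin n)) : _ →ₗ[ℝ] _) = (n : ℝ) := by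
    have : ((1 : EuclideanSpace ℝ (Fin n) →L[ℝ] EuclideanSpace ℝ (Fin n)) : EuclideanSpace ℝ (Fin n) →ₗ[ℝ] EuclideanSpace ℝ (Fin n)) = LinearMap.id := rfl
    rw [this, LinearMap.trace_id]
    simp
  rw [hone]
  ring

/-- Let `G ⊆ O(V)` preserve the inner product and let `u ∈ End(V)`.  For a factorization
`u = x·s` with `x ∈ G` and `s ∈ 𝔤^⊥`, the squared Frobenius distance satisfies
`‖u − x‖² = tr(uᵀu) − 2·tr(s) + n`; hence among such factorizations, a larger value of
`tr(s)` corresponds exactly to a smaller distance `‖u − x‖²`. -/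
theorem distance_formula_orthogonal_factorization
    {n : ℕ}
    (G : Set (EuclideanSpace ℝ (Fin n) →L[ℝ] EuclideanSpace ℝ (Fin n)))
    (hclosed : IsClosed G)
    (hone : (1 : EuclideanSpace ℝ (Fin n) →L[ℝ] EuclideanSpace ℝ (Fin n)) ∈ G)
    (hmul : ∀ x ∈ G, ∀ y ∈ G, x * y ∈ G)
    (hinv : ∀ x ∈ G, ∀ y, x * y = 1 → y ∈ G)
    (hO : ∀ x ∈ G, ContinuousLinearMap.adjoint x ∘L x = 1)
    (u x s : EuclideanSpace ℝ (Fin n) →L[ℝ] EuclideanSpace ℝ (Fin n))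
    (hx : x ∈ G)
    (hs : ∀ b ∈ tangentConeAt ℝ G 1,
      LinearMap.trace ℝ (EuclideanSpace ℝ (Fin n))
        (ContinuousLinearMap.adjoint s ∘L b : EuclideanSpace ℝ (Fin n) →L[ℝ] EuclideanSpace ℝ (Fin n)) = 0)
    (hu : u = x ∘L s) :
    let F : (EuclideanSpace ℝ (Fin n) →L[ℝ] EuclideanSpace ℝ (Fin n)) →
            (EuclideanSpace ℝ (Fin n) →L[ℝ] EuclideanSpace ℝ (Fin n)) → ℝ :=
      fun a b => LinearMap.trace ℝ (EuclideanSpace ℝ (Fin n))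
        (ContinuousLinearMap.adjoint a ∘L b : EuclideanSpace ℝ (Fin n) →L[ℝ] EuclideanSpace ℝ (Fin n))
    let tr : (EuclideanSpace ℝ (Fin n) →L[ℝ] EuclideanSpace ℝ (Fin n)) → ℝ :=
      fun a => LinearMap.trace ℝ (EuclideanSpace ℝ (Fin n)) a
    F (u - x) (u - x) = F u u - 2 * tr s + (n : ℝ) ∧
    (∀ x' s', x' ∈ G →
      (∀ b ∈ tangentConeAt ℝ G 1, F s' b = 0) → u = x' ∘L s' →
      (tr s' ≤ tr s ↔ F (u - x) (u - x) ≤ F (u - x') (u - x'))) := by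
  intro F tr
  have key : F (u - x) (u - x) = F u u - 2 * tr s + (n : ℝ) := by
    rw [hu]; exact my_key x s (hO x hx)
  refine ⟨key, fun x' s' hx' _ hu' => ?_⟩
  have key' : F (u - x') (u - x') = F u u - 2 * tr s' + (n : ℝ) := by
    rw [hu']; exact my_key x' s' (hO x' hx')
  rw [key, key']
  constructor <;> intro h <;> linarith
end

section
/- Let u be an invertible real n×n matrix such that uᵀu has n distinct (necessarily positive) eigenvalues λ₁,…,λ_n, and write uᵀu = y·diag(λ₁,…,λ_n)·yᵀ with y orthogonal. Then the symmetric matrices s with s² = uᵀu are exactly the 2ⁿ matrices y·diag(±√λ₁,…,±√λ_n)·yᵀ, and correspondingly there are exactly 2ⁿ pairs (x, s) with x orthogonal, s symmetric and u = x·s. -/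
open Matrix

/-- Let `u` be an invertible real `n×n` matrix such that `uᵀu` has `n` distinct positive
eigenvalues `μ₁,…,μₙ`, with `uᵀu = y·diag(μ)·yᵀ` for `y` orthogonal.  Then the symmetric
matrices `s` with `s² = uᵀu` are exactly the `2ⁿ` matrices `y·diag(±√μ₁,…,±√μₙ)·yᵀ`, and
correspondingly there are exactly `2ⁿ` pairs `(x,s)` with `x` orthogonal, `s` symmetric
and `u = x·s`. -/
theorem symmetric_square_roots_count
    (n : ℕ) (u y : Matrix (Fin n) (Fin n) ℝ) (μ : Fin n → ℝ)
    (hu : IsUnit u.det) (hy : yᵀ * y = 1)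
    (hpos : ∀ i, 0 < μ i) (hinj : Function.Injective μ)
    (hdiag : uᵀ * u = y * Matrix.diagonal μ * yᵀ) :
    ({s : Matrix (Fin n) (Fin n) ℝ | sᵀ = s ∧ s * s = uᵀ * u} =
      {s : Matrix (Fin n) (Fin n) ℝ | ∃ ε : Fin n → ℝ, (∀ i, ε i = 1 ∨ ε i = -1) ∧
        s = y * Matrix.diagonal (fun i => ε i * Real.sqrt (μ i)) * yᵀ}) ∧
    Set.ncard {s : Matrix (Fin n) (Fin n) ℝ | sᵀ = s ∧ s * s = uᵀ * u} = 2 ^ n ∧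
    Set.ncard {p : Matrix (Fin n) (Fin n) ℝ × Matrix (Fin n) (Fin n) ℝ |
        p.1ᵀ * p.1 = 1 ∧ p.2ᵀ = p.2 ∧ u = p.1 * p.2} = 2 ^ n := by
  have hys : y * yᵀ = 1 := by rwa [mul_eq_one_comm] at hy
  have hsqrt_pos : ∀ i, 0 < Real.sqrt (μ i) := fun i => Real.sqrt_pos.mpr (hpos i)
  have hsqrt_ne : ∀ i, Real.sqrt (μ i) ≠ 0 := fun i => ne_of_gt (hsqrt_pos i)
  have hsq_sqrt : ∀ i, Real.sqrt (μ i) * Real.sqrt (μ i) = μ i :=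
    fun i => Real.mul_self_sqrt (hpos i).le
  -- Part 1 : the set equality
  have hset : ({s : Matrix (Fin n) (Fin n) ℝ | sᵀ = s ∧ s * s = uᵀ * u} =
      {s : Matrix (Fin n) (Fin n) ℝ | ∃ ε : Fin n → ℝ, (∀ i, ε i = 1 ∨ ε i = -1) ∧
        s = y * Matrix.diagonal (fun i => ε i * Real.sqrt (μ i)) * yᵀ}) := by
    ext s
    simp only [Set.mem_setOf_eq]
    constructor
    · rintro ⟨hsym, hsq⟩
      set t := yᵀ * s * y with ht
      have hts : s = y * t * yᵀ := by
        rw [ht]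
        calc s = (y * yᵀ) * s * (y * yᵀ) := by rw [hys]; simp
        _ = y * (yᵀ * s * y) * yᵀ := by noncomm_ring
      have htsq : t * t = Matrix.diagonal μ := by
        have : t * t = yᵀ * (s * s) * y := by
          rw [ht]
          calc (yᵀ * s * y) * (yᵀ * s * y) = yᵀ * s * (y * yᵀ) * s * y := by noncomm_ring
          _ = yᵀ * (s * s) * y := by rw [hys]; noncomm_ring
        rw [this, hsq, hdiag]
        calc yᵀ * (y * Matrix.diagonal μ * yᵀ) * y
            = (yᵀ * y) * Matrix.diagonal μ * (yᵀ * y) := by noncomm_ring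
        _ = Matrix.diagonal μ := by rw [hy]; simp
      have hcomm : t * Matrix.diagonal μ = Matrix.diagonal μ * t := by
        calc t * Matrix.diagonal μ = t * (t * t) := by rw [htsq]
        _ = (t * t) * t := by noncomm_ring
        _ = Matrix.diagonal μ * t := by rw [htsq]
      have hdiagT : t = Matrix.diagonal (fun i => t i i) := by
        ext i j
        by_cases h : i = j
        · subst h; simp
        · rw [Matrix.diagonal_apply_ne _ h]
          have h1 := congrFun (congrFun hcomm i) j
          rw [Matrix.mul_diagonal, Matrix.diagonal_mul] at h1
          have hμ : μ j ≠ μ i := fun he => h (hinj he).symm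
          have : t i j * (μ j - μ i) = 0 := by ring_nf; linarith [h1]
          rcases mul_eq_zero.mp this with h2 | h2
          · exact h2
          · exact absurd (by linarith) hμ
      set d : Fin n → ℝ := fun i => t i i with hd
      have hdsq : ∀ i, d i * d i = μ i := by
        intro i
        have := htsq
        rw [hdiagT, Matrix.diagonal_mul_diagonal] at this
        have h2 := congrFun (congrFun this i) i
        simpa using h2
      refine ⟨fun i => if d i = Real.sqrt (μ i) then 1 else -1,
        fun i => by by_cases h : d i = Real.sqrt (μ i) <;> simp [h], ?_⟩
      have hde : (fun i => (if d i = Real.sqrt (μ i) then (1:ℝ) else -1) * Real.sqrt (μ i)) = d := by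
        funext i
        have : d i * d i = Real.sqrt (μ i) * Real.sqrt (μ i) := by rw [hdsq i, hsq_sqrt i]
        rcases mul_self_eq_mul_self_iff.mp this with h | h
        · rw [if_pos h, one_mul, h]
        · rw [if_neg, neg_one_mul, h]
          rw [h]
          intro hc
          exact hsqrt_ne i (by linarith)
      rw [hde, ← hdiagT, ← hts]
    · rintro ⟨ε, hε, rfl⟩
      constructor
      · simp only [Matrix.transpose_mul, Matrix.transpose_transpose, Matrix.diagonal_transpose]
        noncomm_ring
      · have h1 : (fun i => (ε i * Real.sqrt (μ i)) * (ε i * Real.sqrt (μ i))) = μ := by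
          funext i
          rcases hε i with h | h <;> rw [h] <;> simp [hsq_sqrt i]
        calc (y * Matrix.diagonal (fun i => ε i * Real.sqrt (μ i)) * yᵀ) *
              (y * Matrix.diagonal (fun i => ε i * Real.sqrt (μ i)) * yᵀ)
            = y * (Matrix.diagonal (fun i => ε i * Real.sqrt (μ i)) * (yᵀ * y) *
                Matrix.diagonal (fun i => ε i * Real.sqrt (μ i))) * yᵀ := by noncomm_ring
        _ = y * (Matrix.diagonal (fun i => ε i * Real.sqrt (μ i)) *
                Matrix.diagonal (fun i => ε i * Real.sqrt (μ i))) * yᵀ := by rw [hy]; simp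
        _ = uᵀ * u := by rw [Matrix.diagonal_mul_diagonal, hdiag]; congr 1; exact congrArg _ (congrArg _ h1)
  -- Part 2 : cardinality of square roots
  have hcard2 : Set.ncard {s : Matrix (Fin n) (Fin n) ℝ | sᵀ = s ∧ s * s = uᵀ * u} = 2 ^ n := by
    rw [hset]
    have himg : {s : Matrix (Fin n) (Fin n) ℝ | ∃ ε : Fin n → ℝ, (∀ i, ε i = 1 ∨ ε i = -1) ∧
        s = y * Matrix.diagonal (fun i => ε i * Real.sqrt (μ i)) * yᵀ} =
        (fun ε : Fin n → ℝ => y * Matrix.diagonal (fun i => ε i * Real.sqrt (μ i)) * yᵀ) ''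
          {ε : Fin n → ℝ | ∀ i, ε i = 1 ∨ ε i = -1} := by
      ext s
      simp only [Set.mem_image, Set.mem_setOf_eq]
      exact ⟨fun ⟨ε, h1, h2⟩ => ⟨ε, h1, h2.symm⟩, fun ⟨ε, h1, h2⟩ => ⟨ε, h1, h2.symm⟩⟩
    rw [himg]
    have hinjF : Set.InjOn
        (fun ε : Fin n → ℝ => y * Matrix.diagonal (fun i => ε i * Real.sqrt (μ i)) * yᵀ)
        {ε : Fin n → ℝ | ∀ i, ε i = 1 ∨ ε i = -1} := by
      intro a _ b _ hab
      simp only at hab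
      have h2 : Matrix.diagonal (fun i => a i * Real.sqrt (μ i)) =
          Matrix.diagonal (fun i => b i * Real.sqrt (μ i)) := by
        calc Matrix.diagonal (fun i => a i * Real.sqrt (μ i))
            = yᵀ * (y * Matrix.diagonal (fun i => a i * Real.sqrt (μ i)) * yᵀ) * y := by
              rw [show ∀ D : Matrix (Fin n) (Fin n) ℝ, yᵀ * (y * D * yᵀ) * y =
                (yᵀ * y) * D * (yᵀ * y) from fun D => by noncomm_ring, hy]; simp
        _ = yᵀ * (y * Matrix.diagonal (fun i => b i * Real.sqrt (μ i)) * yᵀ) * y := by rw [hab]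
        _ = Matrix.diagonal (fun i => b i * Real.sqrt (μ i)) := by
              rw [show ∀ D : Matrix (Fin n) (Fin n) ℝ, yᵀ * (y * D * yᵀ) * y =
                (yᵀ * y) * D * (yᵀ * y) from fun D => by noncomm_ring, hy]; simp
      funext i
      have h3 := congrFun (congrFun h2 i) i
      simp only [Matrix.diagonal_apply_eq] at h3
      exact mul_right_cancel₀ (hsqrt_ne i) h3
    rw [Set.ncard_image_of_injOn hinjF]
    have hEpi : {ε : Fin n → ℝ | ∀ i, ε i = 1 ∨ ε i = -1} =
        Set.pi Set.univ (fun _ : Fin n => ({1, -1} : Set ℝ)) := by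
      ext ε
      simp [Set.mem_pi]
    rw [hEpi, ← Nat.card_coe_set_eq,
      Nat.card_congr (Equiv.Set.univPi (fun _ : Fin n => ({1, -1} : Set ℝ))), Nat.card_pi]
    have h2 : Nat.card ({1, -1} : Set ℝ) = 2 := by
      rw [Nat.card_coe_set_eq, Set.ncard_pair (by norm_num : (1:ℝ) ≠ -1)]
    simp only [Finset.prod_const, h2, Finset.card_univ, Fintype.card_fin]
  refine ⟨hset, hcard2, ?_⟩
  -- Part 3 : cardinality of pairs
  set P := {p : Matrix (Fin n) (Fin n) ℝ × Matrix (Fin n) (Fin n) ℝ |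
      p.1ᵀ * p.1 = 1 ∧ p.2ᵀ = p.2 ∧ u = p.1 * p.2} with hP
  have hRdet : ∀ s : Matrix (Fin n) (Fin n) ℝ, s * s = uᵀ * u → IsUnit s.det := by
    intro s hs
    have h1 : IsUnit (s.det * s.det) := by
      rw [← Matrix.det_mul, hs, Matrix.det_mul, Matrix.det_transpose]
      exact hu.mul hu
    exact isUnit_of_mul_isUnit_left h1
  have hinj2 : Set.InjOn Prod.snd P := by
    rintro ⟨x₁, s₁⟩ ⟨hx₁, hs₁, hu₁⟩ ⟨x₂, s₂⟩ ⟨hx₂, hs₂, hu₂⟩ h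
    simp only at h
    subst h
    simp only at hx₁ hs₁ hu₁ hx₂ hs₂ hu₂
    have hsdet : IsUnit s₁.det := by
      apply hRdet
      rw [hu₁]
      have he : (x₁ * s₁)ᵀ * (x₁ * s₁) = s₁ᵀ * (x₁ᵀ * x₁) * s₁ := by
        simp [Matrix.transpose_mul, Matrix.mul_assoc]
      rw [he, hx₁, hs₁, mul_one]
    have : x₁ = x₂ := by
      calc x₁ = x₁ * s₁ * s₁⁻¹ := (Matrix.mul_nonsing_inv_cancel_right _ _ hsdet).symm
      _ = x₂ * s₁ * s₁⁻¹ := by rw [← hu₁, hu₂]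
      _ = x₂ := Matrix.mul_nonsing_inv_cancel_right _ _ hsdet
    rw [this]
  have himg2 : Prod.snd '' P = {s : Matrix (Fin n) (Fin n) ℝ | sᵀ = s ∧ s * s = uᵀ * u} := by
    ext s
    simp only [Set.mem_image, Set.mem_setOf_eq, hP]
    constructor
    · rintro ⟨⟨x, s'⟩, ⟨hx, hs, hu'⟩, rfl⟩
      simp only at hx hs hu' ⊢
      refine ⟨hs, ?_⟩
      rw [hu']
      calc s' * s' = s'ᵀ * (xᵀ * x) * s' := by rw [hx, hs]; simp
      _ = (x * s')ᵀ * (x * s') := by rw [Matrix.transpose_mul]; noncomm_ring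
    · rintro ⟨hsym, hsq⟩
      have hsdet : IsUnit s.det := hRdet s hsq
      have hsinv : s⁻¹ᵀ = s⁻¹ := by rw [Matrix.transpose_nonsing_inv, hsym]
      refine ⟨(u * s⁻¹, s), ⟨?_, hsym, ?_⟩, rfl⟩
      · calc (u * s⁻¹)ᵀ * (u * s⁻¹) = s⁻¹ᵀ * (uᵀ * u) * s⁻¹ := by simp [Matrix.transpose_mul, Matrix.mul_assoc]
        _ = s⁻¹ * (s * s) * s⁻¹ := by rw [hsinv, hsq]
        _ = (s⁻¹ * s) * (s * s⁻¹) := by noncomm_ring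
        _ = 1 := by rw [Matrix.nonsing_inv_mul _ hsdet, Matrix.mul_nonsing_inv _ hsdet, one_mul]
      · exact (Matrix.nonsing_inv_mul_cancel_right _ _ hsdet).symm
  rw [← hcard2, ← himg2, Set.ncard_image_of_injOn hinj2]
end

section
/- For an invertible real n×n matrix u with uᵀu having distinct eigenvalues λ₁ > … > λ_n > 0 and uᵀu = y·diag(λ₁,…,λ_n)·yᵀ (y orthogonal), the orthogonal matrix x minimizing ‖u − x‖² over the orthogonal group is x = u·s⁻¹ with s = y·diag(√λ₁,…,√λ_n)·yᵀ, i.e., the choice of all positive square roots maximizes tr(s) among the 2ⁿ symmetric square roots of uᵀu. -/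
open Matrix

lemma diag_le_one' {n : ℕ} (v : Matrix (Fin n) (Fin n) ℝ) (hv : vᵀ * v = 1) (i : Fin n) :
    v i i ≤ 1 := by
  have h : ∑ j, (v j i)^2 = 1 := by
    have := congrFun (congrFun hv i) i
    simpa [Matrix.mul_apply, Matrix.one_apply, sq] using this
  have h2 : (v i i)^2 ≤ 1 := h ▸ Finset.single_le_sum
    (f := fun j => (v j i)^2) (fun j _ => sq_nonneg _) (Finset.mem_univ i)
  nlinarith [sq_nonneg (v i i - 1)]

/-- For an invertible real `n×n` matrix `u` with `uᵀu = y·diag(λ)·yᵀ`, `y` orthogonal and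
`λ₁ > … > λₙ > 0`, the orthogonal matrix `x` minimizing the Frobenius distance
`‖u − x‖² = tr((u−x)ᵀ(u−x))` over the orthogonal group is `x = u·s⁻¹` with
`s = y·diag(√λ₁,…,√λₙ)·yᵀ`; moreover the all-positive choice of square roots maximizes
`tr(s)` among the `2ⁿ` symmetric square roots of `uᵀu`. -/
theorem closest_orthogonal_matrix
    (n : ℕ) (u y : Matrix (Fin n) (Fin n) ℝ) (lam : Fin n → ℝ)
    (hu : IsUnit u.det) (hy : yᵀ * y = 1)
    (hpos : ∀ i, 0 < lam i) (hanti : StrictAnti lam)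
    (hdiag : uᵀ * u = y * Matrix.diagonal lam * yᵀ) :
    let s : Matrix (Fin n) (Fin n) ℝ :=
      y * Matrix.diagonal (fun i => Real.sqrt (lam i)) * yᵀ
    let x : Matrix (Fin n) (Fin n) ℝ := u * s⁻¹
    xᵀ * x = 1 ∧
    (∀ x' : Matrix (Fin n) (Fin n) ℝ, x'ᵀ * x' = 1 →
      ((u - x)ᵀ * (u - x)).trace ≤ ((u - x')ᵀ * (u - x')).trace) ∧
    (∀ ε : Fin n → ℝ, (∀ i, ε i = 1 ∨ ε i = -1) →
      (y * Matrix.diagonal (fun i => ε i * Real.sqrt (lam i)) * yᵀ).trace ≤ s.trace) := by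
  intro s x
  have hyy : y * yᵀ = 1 := mul_eq_one_comm.mp hy
  have hsT : sᵀ = s := by
    show (y * Matrix.diagonal (fun i => Real.sqrt (lam i)) * yᵀ)ᵀ
      = y * Matrix.diagonal (fun i => Real.sqrt (lam i)) * yᵀ
    simp [Matrix.transpose_mul, Matrix.mul_assoc]
  have hDD : (Matrix.diagonal (fun i => Real.sqrt (lam i))) *
      (Matrix.diagonal (fun i => Real.sqrt (lam i))) = Matrix.diagonal lam := by
    rw [Matrix.diagonal_mul_diagonal]
    have : (fun i => Real.sqrt (lam i) * Real.sqrt (lam i)) = lam :=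
      funext fun i => Real.mul_self_sqrt (hpos i).le
    rw [this]
  have hss : s * s = uᵀ * u := by
    show (y * _ * yᵀ) * (y * _ * yᵀ) = _
    rw [hdiag]
    calc (y * Matrix.diagonal (fun i => Real.sqrt (lam i)) * yᵀ) *
        (y * Matrix.diagonal (fun i => Real.sqrt (lam i)) * yᵀ)
        = y * (Matrix.diagonal (fun i => Real.sqrt (lam i)) * ((yᵀ * y) *
          Matrix.diagonal (fun i => Real.sqrt (lam i)))) * yᵀ := by
          simp only [Matrix.mul_assoc]
      _ = y * Matrix.diagonal lam * yᵀ := by rw [hy, Matrix.one_mul, hDD]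
  have hsdet : IsUnit s.det := by
    have h1 : s.det * s.det = u.det * u.det := by
      have := congrArg Matrix.det hss
      simpa [Matrix.det_mul, Matrix.det_transpose] using this
    have hu0 : u.det ≠ 0 := hu.ne_zero
    have : s.det ≠ 0 := fun h => hu0 (by nlinarith [h1])
    exact isUnit_iff_ne_zero.mpr this
  have hsinv : s * s⁻¹ = 1 := Matrix.mul_nonsing_inv s hsdet
  have hinvs : s⁻¹ * s = 1 := Matrix.nonsing_inv_mul s hsdet
  have hsinvT : (s⁻¹)ᵀ = s⁻¹ := by rw [Matrix.transpose_nonsing_inv, hsT]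
  -- Part 1
  have hxT : xᵀ = s⁻¹ * uᵀ := by
    show (u * s⁻¹)ᵀ = _
    rw [Matrix.transpose_mul, hsinvT]
  have part1 : xᵀ * x = 1 := by
    show xᵀ * (u * s⁻¹) = 1
    rw [hxT, Matrix.mul_assoc, ← Matrix.mul_assoc uᵀ, ← hss, Matrix.mul_assoc s,
      hsinv, Matrix.mul_one, hinvs]
  -- trace of s
  have htr_s : s.trace = ∑ i, Real.sqrt (lam i) := by
    show (y * _ * yᵀ).trace = _
    rw [Matrix.trace_mul_cycle, hy, Matrix.one_mul, Matrix.trace_diagonal]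
  refine ⟨part1, ?_, ?_⟩
  · -- Part 2
    intro x' hx'
    have hxs : x * s = u := by
      show u * s⁻¹ * s = u
      rw [Matrix.mul_assoc, hinvs, Matrix.mul_one]
    have huT : uᵀ = s * xᵀ := by
      rw [← hxs, Matrix.transpose_mul, hsT]
    have hxxT : x * xᵀ = 1 := mul_eq_one_comm.mp part1
    set w := xᵀ * x' with hw
    have hwT : wᵀ * w = 1 := by
      rw [hw, Matrix.transpose_mul, Matrix.transpose_transpose, Matrix.mul_assoc,
        ← Matrix.mul_assoc x, hxxT, Matrix.one_mul, hx']
    set v := yᵀ * w * y with hv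
    have hyy' : ∀ A : Matrix (Fin n) (Fin n) ℝ, y * (yᵀ * A) = A := fun A => by
      rw [← Matrix.mul_assoc, hyy, Matrix.one_mul]
    have hwr : ∀ A : Matrix (Fin n) (Fin n) ℝ, wᵀ * (w * A) = A := fun A => by
      rw [← Matrix.mul_assoc, hwT, Matrix.one_mul]
    have hvT : vᵀ * v = 1 := by
      simp only [hv, Matrix.transpose_mul, Matrix.transpose_transpose, Matrix.mul_assoc,
        hyy', hwr, hy]
    have htrace_ux' : (uᵀ * x').trace = ∑ i, v i i * Real.sqrt (lam i) := by
      have e1 : uᵀ * x' = s * w := by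
        rw [huT, Matrix.mul_assoc, hw]
      rw [e1]
      show (y * Matrix.diagonal (fun i => Real.sqrt (lam i)) * yᵀ * w).trace = _
      rw [Matrix.trace_mul_cycle, Matrix.trace_mul_cycle, ← Matrix.mul_assoc, ← hv]
      simp [Matrix.trace, Matrix.diag, Matrix.mul_diagonal]
    have hle : (uᵀ * x').trace ≤ s.trace := by
      rw [htrace_ux', htr_s]
      apply Finset.sum_le_sum
      intro i _
      have h1 : v i i ≤ 1 := diag_le_one' v hvT i
      have h2 : 0 ≤ Real.sqrt (lam i) := Real.sqrt_nonneg _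
      nlinarith
    have htrace_ux : (uᵀ * x).trace = s.trace := by
      have e1 : uᵀ * x = s := by
        show uᵀ * (u * s⁻¹) = s
        rw [← Matrix.mul_assoc, ← hss, Matrix.mul_assoc, hsinv, Matrix.mul_one]
      rw [e1]
    -- expand both traces
    have expand : ∀ z : Matrix (Fin n) (Fin n) ℝ, zᵀ * z = 1 →
        ((u - z)ᵀ * (u - z)).trace = (uᵀ * u).trace - 2 * (uᵀ * z).trace + n := by
      intro z hz
      have : (u - z)ᵀ * (u - z) = uᵀ * u - uᵀ * z - zᵀ * u + zᵀ * z := by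
        rw [Matrix.transpose_sub]
        noncomm_ring
      rw [this, hz]
      have hzt : (zᵀ * u).trace = (uᵀ * z).trace := by
        rw [← Matrix.trace_transpose (zᵀ * u), Matrix.transpose_mul, Matrix.transpose_transpose]
      simp [Matrix.trace_add, Matrix.trace_sub, hzt, Matrix.trace_one]
      ring
    rw [expand x part1, expand x' hx', htrace_ux]
    linarith
  · -- Part 3
    intro ε hε
    have htr : (y * Matrix.diagonal (fun i => ε i * Real.sqrt (lam i)) * yᵀ).trace
        = ∑ i, ε i * Real.sqrt (lam i) := by
      rw [Matrix.trace_mul_cycle, hy, Matrix.one_mul, Matrix.trace_diagonal]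
    rw [htr, htr_s]
    apply Finset.sum_le_sum
    intro i _
    rcases hε i with h | h <;> rw [h]
    · simp
    · nlinarith [Real.sqrt_nonneg (lam i)]
end

section
/- If u is a general real invertible n×n matrix, then the polar factor x minimizing distance to the orthogonal group has det(x) = sign(det(u)): det(x) = 1 if det(u) > 0 and det(x) = −1 if det(u) < 0. Moreover, among the 2ⁿ orthogonal critical points x = u·s⁻¹ (s ranging over symmetric square roots of uᵀu), exactly 2ⁿ⁻¹ have determinant 1 and 2ⁿ⁻¹ have determinant −1. -/
/-!
With `S = y·diag(√μ)·yᵀ`, the symmetric positive square root of `uᵀu`, the matrix `p = u S⁻¹` is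
orthogonal and `u = p S`. For orthogonal `x`, `‖u - x‖² = tr(uᵀu) + n - 2 tr(S pᵀx)`, and
`tr(S q) = Σ √μᵢ (yᵀ q y)ᵢᵢ ≤ Σ √μᵢ` for orthogonal `q`, with equality only at `q = 1`. So the
minimiser is `p`, whose determinant `det u / ∏ √μᵢ` squares to `1` and has the sign of `det u`.
The critical point of the sign vector `ε` has determinant `(det u / ∏ √μᵢ) · ∏ εᵢ`, and flipping one
sign is an involution exchanging the sign vectors of product `1` and `-1`, so each class has `2ⁿ⁻¹`
elements.
-/

open Matrix Finset

def signVectors (ι : Type*) : Set (ι → ℝ) := {ε | ∀ i, ε i = 1 ∨ ε i = -1}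

section SignVectors

variable {ι : Type*} [Fintype ι]

theorem signVectors_eq_coe_piFinset [DecidableEq ι] :
    signVectors ι = ↑(Fintype.piFinset fun _ : ι => ({1, -1} : Finset ℝ)) := by
  ext ε
  simp [signVectors]

theorem ncard_signVectors : (signVectors ι).ncard = 2 ^ Fintype.card ι := by
  classical
  rw [signVectors_eq_coe_piFinset, Set.ncard_coe_finset, Fintype.card_piFinset,
    card_pair (by norm_num), prod_const, card_univ]

theorem prod_mul_self_eq_one_of_mem_signVectors {ε : ι → ℝ} (hε : ε ∈ signVectors ι) :
    (∏ i, ε i) * ∏ i, ε i = 1 := by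
  rw [← prod_mul_distrib]
  exact prod_eq_one fun i _ => by rcases hε i with h | h <;> simp [h]

theorem ncard_signVectors_prod_eq_neg [DecidableEq ι] (i₀ : ι) (d : ℝ) :
    {ε ∈ signVectors ι | ∏ i, ε i = -d}.ncard = {ε ∈ signVectors ι | ∏ i, ε i = d}.ncard := by
  set flip : (ι → ℝ) → (ι → ℝ) := fun ε => Function.update ε i₀ (-ε i₀)
  have hflip : flip.Involutive := fun ε => by simp [flip]
  have hprod : ∀ ε, ∏ i, flip ε i = -∏ i, ε i := fun ε => by
    rw [prod_update_of_mem (mem_univ i₀), ← mul_prod_erase univ ε (mem_univ i₀),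
      sdiff_singleton_eq_erase, neg_mul]
  have hsign : ∀ ε, flip ε ∈ signVectors ι ↔ ε ∈ signVectors ι := fun ε => by
    refine forall_congr' fun i => ?_
    rcases eq_or_ne i i₀ with rfl | hi
    · simp only [flip, Function.update_self, neg_eq_iff_eq_neg, neg_neg]
      tauto
    · simp only [flip, Function.update_of_ne hi]
  rw [← Set.ncard_image_of_injective _ hflip.injective, hflip.image_eq_preimage_symm]
  congr 1
  ext ε
  simp only [Set.mem_preimage, Set.mem_ofPred_eq, hsign, hprod, neg_inj]

theorem ncard_signVectors_prod_eq [Nonempty ι] {d : ℝ} (hd : d = 1 ∨ d = -1) :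
    {ε ∈ signVectors ι | ∏ i, ε i = d}.ncard = 2 ^ (Fintype.card ι - 1) := by
  classical
  have hsplit : {ε ∈ signVectors ι | ∏ i, ε i = d} ∪ {ε ∈ signVectors ι | ∏ i, ε i = -d} =
      signVectors ι := by
    ext ε
    simp only [Set.mem_union, Set.mem_ofPred_eq]
    refine ⟨fun h => h.elim And.left And.left, fun hε => ?_⟩
    rcases mul_self_eq_one_iff.mp (prod_mul_self_eq_one_of_mem_signVectors hε) with h | h <;>
      rcases hd with rfl | rfl <;> simp_all
  have hdisj : Disjoint {ε ∈ signVectors ι | ∏ i, ε i = d} {ε ∈ signVectors ι | ∏ i, ε i = -d} :=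
    Set.disjoint_left.2 fun ε h₁ h₂ => by rcases hd with rfl | rfl <;> linarith [h₁.2, h₂.2]
  have hfin : (signVectors ι).Finite := by
    rw [signVectors_eq_coe_piFinset]; exact Finset.finite_toSet _
  have htotal := ncard_signVectors (ι := ι)
  rw [← hsplit, Set.ncard_union_eq hdisj (hfin.subset fun _ h => h.1) (hfin.subset fun _ h => h.1),
    ncard_signVectors_prod_eq_neg (Classical.arbitrary ι)] at htotal
  have hcard : Fintype.card ι = Fintype.card ι - 1 + 1 :=
    (Nat.sub_add_cancel Fintype.card_pos).symm
  rw [hcard, pow_succ] at htotal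
  omega

end SignVectors

namespace Matrix

section Orthogonal

variable {ι R : Type*} [Fintype ι] [DecidableEq ι] [CommRing R]

theorem transpose_mul_self_mul_eq_one {a b : Matrix ι ι R} (ha : aᵀ * a = 1)
    (hb : bᵀ * b = 1) : (a * b)ᵀ * (a * b) = 1 := by
  rw [transpose_mul, Matrix.mul_assoc, ← Matrix.mul_assoc aᵀ, ha, Matrix.one_mul, hb]

theorem trace_transpose_sub_mul_sub {u x : Matrix ι ι R} (hx : xᵀ * x = 1) :
    ((u - x)ᵀ * (u - x)).trace = (uᵀ * u).trace + Fintype.card ι - 2 * (uᵀ * x).trace := by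
  have hxu : (xᵀ * u).trace = (uᵀ * x).trace := by
    rw [← trace_transpose, transpose_mul, transpose_transpose]
  rw [transpose_sub, sub_mul, mul_sub, mul_sub, hx, trace_sub, trace_sub, trace_sub, trace_one,
    hxu]
  ring

theorem transpose_mul_self_mul_inv_eq_one {u S : Matrix ι ι R} (hS : Sᵀ = S)
    (hSdet : IsUnit S.det) (hSS : S * S = uᵀ * u) : (u * S⁻¹)ᵀ * (u * S⁻¹) = 1 := by
  rw [transpose_mul, transpose_nonsing_inv, hS, Matrix.mul_assoc, ← Matrix.mul_assoc uᵀ,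
    ← hSS, Matrix.mul_assoc, mul_nonsing_inv _ hSdet, Matrix.mul_one, nonsing_inv_mul _ hSdet]

end Orthogonal

section Conj

variable {ι R : Type*} [Fintype ι] [DecidableEq ι] [CommRing R] {y : Matrix ι ι R}

theorem transpose_conj_diagonal (y : Matrix ι ι R) (v : ι → R) :
    (y * diagonal v * yᵀ)ᵀ = y * diagonal v * yᵀ := by
  simp [transpose_mul, Matrix.mul_assoc]

theorem det_conj_diagonal (hy : yᵀ * y = 1) (v : ι → R) :
    (y * diagonal v * yᵀ).det = ∏ i, v i := by
  have hdet : y.det * y.det = 1 := by simpa using congrArg det hy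
  rw [det_mul, det_mul, det_transpose, det_diagonal]
  linear_combination (∏ i, v i) * hdet

theorem conj_diagonal_mul_conj_diagonal (hy : yᵀ * y = 1) (v w : ι → R) :
    (y * diagonal v * yᵀ) * (y * diagonal w * yᵀ) = y * diagonal (v * w) * yᵀ := by
  rw [show y * diagonal v * yᵀ * (y * diagonal w * yᵀ) = y * diagonal v * (yᵀ * y) * diagonal w * yᵀ
    by simp only [Matrix.mul_assoc], hy, Matrix.mul_one, Matrix.mul_assoc y,
    diagonal_mul_diagonal]
  rfl

theorem transpose_mul_conj_diagonal_mul (hy : yᵀ * y = 1) (v : ι → R) :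
    yᵀ * (y * diagonal v * yᵀ) * y = diagonal v := by
  simp only [← Matrix.mul_assoc, hy, Matrix.one_mul]
  rw [Matrix.mul_assoc, hy, Matrix.mul_one]

theorem conj_diagonal_injective (hy : yᵀ * y = 1) :
    Function.Injective fun v : ι → R => y * diagonal v * yᵀ := fun v w h =>
  diagonal_injective <| by
    simpa only [transpose_mul_conj_diagonal_mul hy] using congrArg (fun z => yᵀ * z * y) h

theorem trace_conj_diagonal_mul (y : Matrix ι ι R) (v : ι → R) (q : Matrix ι ι R) :
    (y * diagonal v * yᵀ * q).trace = (diagonal v * (yᵀ * q * y)).trace := by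
  rw [Matrix.mul_assoc, Matrix.mul_assoc, trace_mul_comm]
  simp only [Matrix.mul_assoc]

end Conj

section Real

variable {ι : Type*} [Fintype ι] [DecidableEq ι]

theorem diag_le_one_of_transpose_mul_self_eq_one {m : Matrix ι ι ℝ} (hm : mᵀ * m = 1)
    (i : ι) : m i i ≤ 1 := by
  have hcol : ∑ j, m j i * m j i = 1 := by
    simpa [mul_apply] using congrFun (congrFun hm i) i
  have : m i i * m i i ≤ 1 :=
    hcol ▸ single_le_sum (f := fun j => m j i * m j i) (fun j _ => mul_self_nonneg _) (mem_univ i)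
  nlinarith

theorem eq_one_of_transpose_mul_self_eq_one_of_trace_eq {m : Matrix ι ι ℝ} (hm : mᵀ * m = 1)
    (htr : m.trace = Fintype.card ι) : m = 1 := by
  -- `tr((m - 1)ᵀ(m - 1)) = 2 card ι - 2 tr m` vanishes
  have h := trace_transpose_sub_mul_sub (u := m) (x := 1) (by simp)
  rw [hm, Matrix.mul_one, trace_transpose, htr, trace_one] at h
  rw [← sub_eq_zero, ← trace_conjTranspose_mul_self_eq_zero_iff,
    conjTranspose_eq_transpose_of_trivial, h]
  ring

theorem trace_diagonal_mul (ρ : ι → ℝ) (m : Matrix ι ι ℝ) :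
    (diagonal ρ * m).trace = ∑ i, ρ i * m i i := by
  simp only [trace, diag_apply, diagonal_mul]

theorem eq_one_of_sum_le_trace_diagonal_mul {ρ : ι → ℝ} (hρ : ∀ i, 0 < ρ i)
    {m : Matrix ι ι ℝ} (hm : mᵀ * m = 1) (h : ∑ i, ρ i ≤ (diagonal ρ * m).trace) : m = 1 := by
  have hle : ∀ i ∈ univ, ρ i * m i i ≤ ρ i := fun i _ =>
    mul_le_of_le_one_right (hρ i).le (diag_le_one_of_transpose_mul_self_eq_one hm i)
  rw [trace_diagonal_mul] at h
  have hdiag : ∀ i, m i i = 1 := fun i => by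
    simpa [(hρ i).ne'] using (sum_eq_sum_iff_of_le hle).1 (le_antisymm (sum_le_sum hle) h) i
  exact eq_one_of_transpose_mul_self_eq_one_of_trace_eq hm (by simp [trace, hdiag])

theorem eq_of_trace_transpose_sub_mul_sub_le {u y p x : Matrix ι ι ℝ} {ρ : ι → ℝ}
    (hy : yᵀ * y = 1) (hρ : ∀ i, 0 < ρ i)
    (hp : pᵀ * p = 1) (hu : u = p * (y * diagonal ρ * yᵀ)) (hx : xᵀ * x = 1)
    (hle : ((u - x)ᵀ * (u - x)).trace ≤ ((u - p)ᵀ * (u - p)).trace) : x = p := by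
  have hpp : p * pᵀ = 1 := mul_eq_one_comm.mp hp
  have hyy : y * yᵀ = 1 := mul_eq_one_comm.mp hy
  have htrace : ∀ z, (uᵀ * z).trace = (diagonal ρ * (yᵀ * (pᵀ * z) * y)).trace := fun z => by
    rw [← trace_conj_diagonal_mul, hu, transpose_mul, transpose_conj_diagonal]
    simp only [Matrix.mul_assoc]
  have hm : (yᵀ * (pᵀ * x) * y)ᵀ * (yᵀ * (pᵀ * x) * y) = 1 :=
    transpose_mul_self_mul_eq_one (transpose_mul_self_mul_eq_one
      (by rwa [transpose_transpose]) (transpose_mul_self_mul_eq_one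
        (by rwa [transpose_transpose]) hx)) hy
  have hsum : ∑ i, ρ i ≤ (diagonal ρ * (yᵀ * (pᵀ * x) * y)).trace := by
    rw [trace_transpose_sub_mul_sub hx, trace_transpose_sub_mul_sub hp, htrace x, htrace p, hp,
      Matrix.mul_one, hy, Matrix.mul_one, trace_diagonal] at hle
    linarith
  have hq : pᵀ * x = 1 :=
    calc pᵀ * x = y * yᵀ * (pᵀ * x) * (y * yᵀ) := by rw [hyy, Matrix.one_mul, Matrix.mul_one]
      _ = y * (yᵀ * (pᵀ * x) * y) * yᵀ := by simp only [Matrix.mul_assoc]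
      _ = 1 := by rw [eq_one_of_sum_le_trace_diagonal_mul hρ hm hsum, Matrix.mul_one, hyy]
  rw [← Matrix.one_mul x, ← hpp, Matrix.mul_assoc, hq, Matrix.mul_one]

theorem det_mul_inv_conj_diagonal {K : Type*} [Field K] {y : Matrix ι ι K} (hy : yᵀ * y = 1)
    (u : Matrix ι ι K) (v : ι → K) : (u * (y * diagonal v * yᵀ)⁻¹).det = u.det / ∏ i, v i := by
  rw [det_mul, det_nonsing_inv, det_conj_diagonal hy, Ring.inverse_eq_inv', div_eq_mul_inv]

end Real

end Matrix

section CriticalPoints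

variable {ι : Type*} [Fintype ι] [DecidableEq ι] {u y : Matrix ι ι ℝ} {μ : ι → ℝ}

theorem det_div_prod_sqrt_mul_self (hy : yᵀ * y = 1) (hμ : ∀ i, 0 < μ i)
    (hdiag : uᵀ * u = y * diagonal μ * yᵀ) :
    (u.det / ∏ i, √(μ i)) * (u.det / ∏ i, √(μ i)) = 1 := by
  have hdet : u.det * u.det = ∏ i, μ i := by
    simpa [det_conj_diagonal hy] using congrArg det hdiag
  have hsqrt : (∏ i, √(μ i)) * ∏ i, √(μ i) = ∏ i, μ i := by
    rw [← prod_mul_distrib]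
    exact prod_congr rfl fun i _ => Real.mul_self_sqrt (hμ i).le
  have hpos : 0 < ∏ i, √(μ i) := prod_pos fun i _ => Real.sqrt_pos.2 (hμ i)
  rw [div_mul_div_comm, hdet, hsqrt, div_self (hsqrt ▸ (mul_pos hpos hpos).ne')]

theorem det_mul_inv_conj_diagonal_mul_sign (hy : yᵀ * y = 1) (ρ : ι → ℝ) {ε : ι → ℝ}
    (hε : ε ∈ signVectors ι) :
    (u * (y * diagonal (fun i => ε i * ρ i) * yᵀ)⁻¹).det = u.det / (∏ i, ρ i) * ∏ i, ε i := by
  rw [det_mul_inv_conj_diagonal hy, prod_mul_distrib, ← div_div, div_eq_mul_inv _ (∏ i, ε i),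
    inv_eq_of_mul_eq_one_right (prod_mul_self_eq_one_of_mem_signVectors hε), mul_div_right_comm]

theorem injOn_mul_inv_conj_diagonal_mul_sign (hu : IsUnit u.det) (hy : yᵀ * y = 1) {ρ : ι → ℝ}
    (hρ : ∀ i, ρ i ≠ 0) :
    Set.InjOn (fun ε => u * (y * diagonal (fun i => ε i * ρ i) * yᵀ)⁻¹) (signVectors ι) := by
  intro ε hε ε' _ h
  have hdet : IsUnit (y * diagonal (fun i => ε i * ρ i) * yᵀ).det := by
    rw [det_conj_diagonal hy, isUnit_iff_ne_zero, prod_mul_distrib]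
    exact mul_ne_zero (left_ne_zero_of_mul_eq_one (prod_mul_self_eq_one_of_mem_signVectors hε))
      (prod_ne_zero_iff.2 fun i _ => hρ i)
  have h' := Matrix.inv_inj ((u.isUnit_iff_isUnit_det.2 hu).mul_left_cancel h) hdet
  funext i
  exact mul_right_cancel₀ (hρ i) (congrFun (conj_diagonal_injective hy h') i)

theorem ncard_setOf_mul_inv_conj_diagonal_det_eq [Nonempty ι] (hu : IsUnit u.det)
    (hy : yᵀ * y = 1) (hμ : ∀ i, 0 < μ i) (hdiag : uᵀ * u = y * diagonal μ * yᵀ) {d : ℝ}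
    (hd : d = 1 ∨ d = -1) :
    {x : Matrix ι ι ℝ | (∃ ε : ι → ℝ, (∀ i, ε i = 1 ∨ ε i = -1) ∧
        x = u * (y * diagonal (fun i => ε i * √(μ i)) * yᵀ)⁻¹) ∧ x.det = d}.ncard =
      2 ^ (Fintype.card ι - 1) := by
  set c := u.det / ∏ i, √(μ i)
  have hc : c * c = 1 := det_div_prod_sqrt_mul_self hy hμ hdiag
  set F : (ι → ℝ) → Matrix ι ι ℝ := fun ε => u * (y * diagonal (fun i => ε i * √(μ i)) * yᵀ)⁻¹
  have hdetF : ∀ ε ∈ signVectors ι, (F ε).det = c * ∏ i, ε i := fun ε hε =>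
    det_mul_inv_conj_diagonal_mul_sign hy _ hε
  have hinj : Set.InjOn F (signVectors ι) :=
    injOn_mul_inv_conj_diagonal_mul_sign hu hy fun i => (Real.sqrt_pos.2 (hμ i)).ne'
  have hcd : c * d = 1 ∨ c * d = -1 := by
    rcases mul_self_eq_one_iff.mp hc with h | h <;> rcases hd with rfl | rfl <;> norm_num [h]
  calc _ = (F '' {ε ∈ signVectors ι | ∏ i, ε i = c * d}).ncard := by
        congr 1
        ext x
        constructor
        · rintro ⟨⟨ε, hε, rfl⟩, hx⟩
          refine ⟨ε, ⟨hε, ?_⟩, rfl⟩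
          rw [← hx, hdetF ε hε, ← mul_assoc, hc, one_mul]
        · rintro ⟨ε, ⟨hε, hprod⟩, rfl⟩
          exact ⟨⟨ε, hε, rfl⟩, by rw [hdetF ε hε, hprod, ← mul_assoc, hc, one_mul]⟩
    _ = 2 ^ (Fintype.card ι - 1) := by
        rw [(hinj.mono fun _ h => h.1).ncard_image, ncard_signVectors_prod_eq hcd]

end CriticalPoints

theorem closest_orthogonal_determinant_and_count_general
    (n : ℕ) (hn : 0 < n) (u y : Matrix (Fin n) (Fin n) ℝ) (μ : Fin n → ℝ)
    (hu : IsUnit u.det) (hy : yᵀ * y = 1)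
    (hpos : ∀ i, 0 < μ i)
    (hdiag : uᵀ * u = y * Matrix.diagonal μ * yᵀ) :
    (∀ x : Matrix (Fin n) (Fin n) ℝ, xᵀ * x = 1 →
      (∀ x' : Matrix (Fin n) (Fin n) ℝ, x'ᵀ * x' = 1 →
        ((u - x)ᵀ * (u - x)).trace ≤ ((u - x')ᵀ * (u - x')).trace) →
      ((0 < u.det → x.det = 1) ∧ (u.det < 0 → x.det = -1))) ∧
    Set.ncard {x : Matrix (Fin n) (Fin n) ℝ |
        (∃ ε : Fin n → ℝ, (∀ i, ε i = 1 ∨ ε i = -1) ∧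
          x = u * (y * Matrix.diagonal (fun i => ε i * Real.sqrt (μ i)) * yᵀ)⁻¹) ∧
        x.det = 1} = 2 ^ (n - 1) ∧
    Set.ncard {x : Matrix (Fin n) (Fin n) ℝ |
        (∃ ε : Fin n → ℝ, (∀ i, ε i = 1 ∨ ε i = -1) ∧
          x = u * (y * Matrix.diagonal (fun i => ε i * Real.sqrt (μ i)) * yᵀ)⁻¹) ∧
        x.det = -1} = 2 ^ (n - 1) := by
  have : Nonempty (Fin n) := ⟨⟨0, hn⟩⟩
  have hsqrt : ∀ i, 0 < √(μ i) := fun i => Real.sqrt_pos.2 (hpos i)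
  have hprod : 0 < ∏ i, √(μ i) := prod_pos fun i _ => hsqrt i
  set S := y * diagonal (fun i => √(μ i)) * yᵀ
  have hSdet : IsUnit S.det := by
    rw [det_conj_diagonal hy]; exact hprod.ne'.isUnit
  have hSS : S * S = uᵀ * u := by
    rw [conj_diagonal_mul_conj_diagonal hy, hdiag]
    congr; funext i; exact Real.mul_self_sqrt (hpos i).le
  have hp := transpose_mul_self_mul_inv_eq_one (transpose_conj_diagonal y _) hSdet hSS
  refine ⟨fun x hx hmin => ?_, ?_, ?_⟩
  · obtain rfl : x = u * S⁻¹ := eq_of_trace_transpose_sub_mul_sub_le hy hsqrt hp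
      (nonsing_inv_mul_cancel_right S u hSdet).symm hx (hmin _ hp)
    have hc := mul_self_eq_one_iff.mp (det_div_prod_sqrt_mul_self hy hpos hdiag)
    rw [det_mul_inv_conj_diagonal hy]
    exact ⟨fun hdu => hc.resolve_right fun h => by linarith [div_pos hdu hprod],
      fun hdu => hc.resolve_left fun h => by linarith [div_neg_of_neg_of_pos hdu hprod]⟩
  · simpa using ncard_setOf_mul_inv_conj_diagonal_det_eq hu hy hpos hdiag (Or.inl rfl)
  · simpa using ncard_setOf_mul_inv_conj_diagonal_det_eq hu hy hpos hdiag (Or.inr rfl)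

/-- For a general real invertible `n×n` matrix `u` (here: `uᵀu = y·diag(μ)·yᵀ` with `y`
orthogonal and `μ` distinct positive), any orthogonal matrix `x` minimizing the Frobenius
distance `‖u − x‖²` over the orthogonal group satisfies `det x = sign(det u)`; and among
the `2ⁿ` orthogonal critical points `x = u·(y·diag(±√μ)·yᵀ)⁻¹`, exactly `2ⁿ⁻¹` have
determinant `1` and exactly `2ⁿ⁻¹` have determinant `−1`. -/
theorem closest_orthogonal_determinant_and_count
    (n : ℕ) (hn : 0 < n) (u y : Matrix (Fin n) (Fin n) ℝ) (μ : Fin n → ℝ)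
    (hu : IsUnit u.det) (hy : yᵀ * y = 1)
    (hpos : ∀ i, 0 < μ i) (hinj : Function.Injective μ)
    (hdiag : uᵀ * u = y * Matrix.diagonal μ * yᵀ) :
    (∀ x : Matrix (Fin n) (Fin n) ℝ, xᵀ * x = 1 →
      (∀ x' : Matrix (Fin n) (Fin n) ℝ, x'ᵀ * x' = 1 →
        ((u - x)ᵀ * (u - x)).trace ≤ ((u - x')ᵀ * (u - x')).trace) →
      ((0 < u.det → x.det = 1) ∧ (u.det < 0 → x.det = -1))) ∧
    Set.ncard {x : Matrix (Fin n) (Fin n) ℝ |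
        (∃ ε : Fin n → ℝ, (∀ i, ε i = 1 ∨ ε i = -1) ∧
          x = u * (y * Matrix.diagonal (fun i => ε i * Real.sqrt (μ i)) * yᵀ)⁻¹) ∧
        x.det = 1} = 2 ^ (n - 1) ∧
    Set.ncard {x : Matrix (Fin n) (Fin n) ℝ |
        (∃ ε : Fin n → ℝ, (∀ i, ε i = 1 ∨ ε i = -1) ∧
          x = u * (y * Matrix.diagonal (fun i => ε i * Real.sqrt (μ i)) * yᵀ)⁻¹) ∧
        x.det = -1} = 2 ^ (n - 1) :=
  closest_orthogonal_determinant_and_count_general n hn u y μ hu hy hpos hdiag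
end

section
/- Let u be an invertible real n×n matrix and x an invertible matrix with xᵀ(u − x) = c·I for some scalar c. Then s := xᵀx satisfies uᵀu = c²·s⁻¹ + 2c·I + s. Conversely, if s is a symmetric matrix with det s = 1 satisfying uᵀu = c²s⁻¹ + 2cI + s (and s commutes with uᵀu), then x := u⁻ᵀ(cI + s) satisfies xᵀx = s, det x = ±1, and xᵀ(u − x) = cI. -/
open Matrix

lemma key_expand {n : ℕ} (c : ℝ) (s : Matrix (Fin n) (Fin n) ℝ) (hs : IsUnit s.det) :
    (c • (1 : Matrix (Fin n) (Fin n) ℝ) + s) * s⁻¹ * (c • 1 + s) =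
      c ^ 2 • s⁻¹ + (2 * c) • (1 : Matrix (Fin n) (Fin n) ℝ) + s := by
  simp only [Matrix.add_mul, Matrix.mul_add, Matrix.smul_mul, Matrix.mul_smul,
    one_mul, Matrix.mul_one, Matrix.mul_nonsing_inv s hs, Matrix.nonsing_inv_mul s hs,
    smul_smul, smul_add]
  rw [← pow_two, two_mul]
  simp only [add_smul, one_smul]
  abel

/-- Let `u` be an invertible real `n×n` matrix and `c` a scalar.  If `x` is invertible
with `xᵀ(u − x) = c·I`, then `s := xᵀx` satisfies `uᵀu = c²·s⁻¹ + 2c·I + s`.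
Conversely, if `s` is symmetric with `det s = 1`, commutes with `uᵀu`, and satisfies
`uᵀu = c²s⁻¹ + 2cI + s`, then `x := u⁻ᵀ(cI + s)` satisfies `xᵀx = s`, `det x = ±1`,
and `xᵀ(u − x) = cI`. -/
theorem sl_critical_equations
    (n : ℕ) (u : Matrix (Fin n) (Fin n) ℝ) (hu : IsUnit u.det) (c : ℝ) :
    (∀ x : Matrix (Fin n) (Fin n) ℝ, IsUnit x.det →
      xᵀ * (u - x) = c • (1 : Matrix (Fin n) (Fin n) ℝ) →
      uᵀ * u = c ^ 2 • (xᵀ * x)⁻¹ + (2 * c) • (1 : Matrix (Fin n) (Fin n) ℝ) + xᵀ * x) ∧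
    (∀ s : Matrix (Fin n) (Fin n) ℝ, sᵀ = s → s.det = 1 →
      s * (uᵀ * u) = (uᵀ * u) * s →
      uᵀ * u = c ^ 2 • s⁻¹ + (2 * c) • (1 : Matrix (Fin n) (Fin n) ℝ) + s →
      let x : Matrix (Fin n) (Fin n) ℝ :=
        (uᵀ)⁻¹ * (c • (1 : Matrix (Fin n) (Fin n) ℝ) + s)
      xᵀ * x = s ∧ (x.det = 1 ∨ x.det = -1) ∧
      xᵀ * (u - x) = c • (1 : Matrix (Fin n) (Fin n) ℝ)) := by
  have huT : IsUnit uᵀ.det := by rwa [det_transpose]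
  constructor
  · intro x hx h
    have hxT : IsUnit xᵀ.det := by rwa [det_transpose]
    have hs : IsUnit (xᵀ * x).det := by
      rw [det_mul, det_transpose]; exact hx.mul hx
    rw [Matrix.mul_sub, sub_eq_iff_eq_add] at h
    have hu2 : u = (xᵀ)⁻¹ * (c • 1 + xᵀ * x) := by
      rw [← h, ← Matrix.mul_assoc, Matrix.nonsing_inv_mul _ hxT, one_mul]
    have huT2 : uᵀ = (c • 1 + xᵀ * x) * x⁻¹ := by
      rw [hu2, transpose_mul, transpose_nonsing_inv, transpose_transpose,
        transpose_add, transpose_smul, transpose_one, transpose_mul, transpose_transpose]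
    rw [huT2, hu2, ← key_expand c (xᵀ * x) hs, Matrix.mul_inv_rev]
    noncomm_ring
  · intro s hsym hdet hcomm heq
    have hs : IsUnit s.det := by rw [hdet]; exact isUnit_one
    have hfact : uᵀ * u = (c • 1 + s) * s⁻¹ * (c • 1 + s) := by
      rw [heq, key_expand c s hs]
    have hcs : IsUnit (c • (1 : Matrix (Fin n) (Fin n) ℝ) + s).det := by
      have h2 : IsUnit ((uᵀ) * u).det := by rw [det_mul]; exact huT.mul hu
      rw [hfact, det_mul, det_mul] at h2
      exact isUnit_of_mul_isUnit_left (isUnit_of_mul_isUnit_left h2)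
    intro x
    have hxT : xᵀ = (c • 1 + s) * u⁻¹ := by
      show ((uᵀ)⁻¹ * (c • 1 + s))ᵀ = _
      rw [transpose_mul, transpose_nonsing_inv, transpose_transpose,
        transpose_add, transpose_smul, transpose_one, hsym]
    have h1 : xᵀ * x = s := by
      show _ = s
      rw [hxT]
      show (c • 1 + s) * u⁻¹ * ((uᵀ)⁻¹ * (c • 1 + s)) = s
      have : u⁻¹ * (uᵀ)⁻¹ = (uᵀ * u)⁻¹ := (Matrix.mul_inv_rev _ _).symm
      rw [Matrix.mul_assoc, ← Matrix.mul_assoc u⁻¹, this, hfact,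
        Matrix.mul_inv_rev, Matrix.mul_inv_rev,
        Matrix.nonsing_inv_nonsing_inv s hs]
      rw [← Matrix.mul_assoc, ← Matrix.mul_assoc, ← Matrix.mul_assoc,
        Matrix.mul_nonsing_inv _ hcs, one_mul, Matrix.mul_assoc,
        Matrix.nonsing_inv_mul _ hcs, Matrix.mul_one]
    refine ⟨h1, ?_, ?_⟩
    · have : x.det * x.det = 1 := by
        have := congrArg Matrix.det h1
        rwa [det_mul, det_transpose, hdet] at this
      exact mul_self_eq_one_iff.mp this
    · rw [Matrix.mul_sub, h1, hxT, Matrix.mul_assoc, Matrix.nonsing_inv_mul u hu,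
        Matrix.mul_one, add_sub_cancel_right]
end

section
/- Let s be a symmetric matrix commuting with uᵀu, where uᵀu has distinct eigenvalues μ₁,…,μ_n; then s is simultaneously diagonalizable with uᵀu, and the equation uᵀu = c²s⁻¹ + 2cI + s together with det s = 1 is equivalent to the system: c² + (2c − μᵢ)λᵢ + λᵢ² = 0 for i = 1,…,n and λ₁⋯λ_n = 1, where λᵢ are the eigenvalues of s corresponding to the eigenvectors of uᵀu with eigenvalue μᵢ. -/
open Matrix

/-- Let `u` be invertible with `uᵀu = y·diag(μ)·yᵀ`, `y` orthogonal and the `μᵢ` pairwise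
distinct, and let `s` be an invertible symmetric matrix commuting with `uᵀu`.  Then `s` is
simultaneously diagonalizable with `uᵀu`: `s = y·diag(λ)·yᵀ` for some `λ`, and the
equation `uᵀu = c²s⁻¹ + 2cI + s` together with `det s = 1` is equivalent to the system
`c² + (2c − μᵢ)λᵢ + λᵢ² = 0` for all `i` and `λ₁⋯λₙ = 1`. -/
theorem sl_eigenvalue_system
    (n : ℕ) (u y s : Matrix (Fin n) (Fin n) ℝ) (μ : Fin n → ℝ) (c : ℝ)
    (hu : IsUnit u.det) (hy : yᵀ * y = 1) (hinj : Function.Injective μ)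
    (hdiag : uᵀ * u = y * Matrix.diagonal μ * yᵀ)
    (hs : sᵀ = s) (hsu : IsUnit s.det)
    (hcomm : s * (uᵀ * u) = (uᵀ * u) * s) :
    ∃ lam : Fin n → ℝ, s = y * Matrix.diagonal lam * yᵀ ∧
      ((uᵀ * u = c ^ 2 • s⁻¹ + (2 * c) • (1 : Matrix (Fin n) (Fin n) ℝ) + s ∧
          s.det = 1) ↔
        ((∀ i, c ^ 2 + (2 * c - μ i) * lam i + lam i ^ 2 = 0) ∧ ∏ i, lam i = 1)) := by
  have hy' : y * yᵀ = 1 := mul_eq_one_comm.mp hy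
  have hyl : ∀ X : Matrix (Fin n) (Fin n) ℝ, yᵀ * (y * X) = X := fun X => by
    rw [← Matrix.mul_assoc, hy, Matrix.one_mul]
  have hyl' : ∀ X : Matrix (Fin n) (Fin n) ℝ, y * (yᵀ * X) = X := fun X => by
    rw [← Matrix.mul_assoc, hy', Matrix.one_mul]
  set M : Matrix (Fin n) (Fin n) ℝ := yᵀ * s * y with hM
  have hsM : s = y * M * yᵀ := by
    rw [hM]
    simp only [Matrix.mul_assoc, hyl']
    rw [hy', Matrix.mul_one]
  have hconj : ∀ A B : Matrix (Fin n) (Fin n) ℝ, y * A * yᵀ = y * B * yᵀ → A = B := by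
    intro A B h
    have h2 := congrArg (fun X => yᵀ * X * y) h
    simp only [Matrix.mul_assoc, hyl] at h2
    rwa [hy, Matrix.mul_one, Matrix.mul_one] at h2
  -- M commutes with diagonal μ
  have hMcomm : M * Matrix.diagonal μ = Matrix.diagonal μ * M := by
    apply hconj
    have h := hcomm
    rw [hdiag, hsM] at h
    calc y * (M * Matrix.diagonal μ) * yᵀ
        = (y * M * yᵀ) * (y * Matrix.diagonal μ * yᵀ) := by
          simp only [Matrix.mul_assoc, hyl]
      _ = (y * Matrix.diagonal μ * yᵀ) * (y * M * yᵀ) := h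
      _ = y * (Matrix.diagonal μ * M) * yᵀ := by
          simp only [Matrix.mul_assoc, hyl]
  -- M is diagonal
  have hMd : M = Matrix.diagonal (fun i => M i i) := by
    ext i j
    by_cases hij : i = j
    · subst hij; simp
    · rw [Matrix.diagonal_apply_ne _ hij]
      have h1 : M i j * μ j = μ i * M i j := by
        have h0 := congrFun (congrFun hMcomm i) j
        rwa [Matrix.mul_diagonal, Matrix.diagonal_mul] at h0
      have h2 : M i j * (μ j - μ i) = 0 := by linear_combination h1
      rcases mul_eq_zero.mp h2 with h | h
      · exact h
      · exact absurd (hinj (sub_eq_zero.mp h)).symm hij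
  set lam : Fin n → ℝ := fun i => M i i with hlam
  have hsd : s = y * Matrix.diagonal lam * yᵀ := by rw [hsM, ← hMd]
  have hdety : yᵀ.det * y.det = 1 := by
    have h := congrArg Matrix.det hy
    rwa [Matrix.det_mul, Matrix.det_one] at h
  have hdets : s.det = ∏ i, lam i := by
    rw [hsd, Matrix.det_mul, Matrix.det_mul, Matrix.det_diagonal]
    linear_combination (∏ i, lam i) * hdety
  have hlam0 : ∀ i, lam i ≠ 0 := by
    intro i hi
    apply hsu.ne_zero
    rw [hdets]
    exact Finset.prod_eq_zero (Finset.mem_univ i) hi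
  have hDD : Matrix.diagonal lam * Matrix.diagonal (fun i => (lam i)⁻¹) = 1 := by
    rw [Matrix.diagonal_mul_diagonal]
    have hf : (fun i => lam i * (lam i)⁻¹) = fun _ : Fin n => (1 : ℝ) :=
      funext fun i => mul_inv_cancel₀ (hlam0 i)
    rw [hf, Matrix.diagonal_one]
  have hsinv : s⁻¹ = y * Matrix.diagonal (fun i => (lam i)⁻¹) * yᵀ := by
    apply Matrix.inv_eq_right_inv
    rw [hsd]
    simp only [Matrix.mul_assoc, hyl]
    rw [← Matrix.mul_assoc (Matrix.diagonal lam) (Matrix.diagonal fun i => (lam i)⁻¹) yᵀ,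
      hDD, Matrix.one_mul, hy']
  have hdsum : (Matrix.diagonal (fun i => c ^ 2 * (lam i)⁻¹ + 2 * c + lam i) :
        Matrix (Fin n) (Fin n) ℝ)
      = c ^ 2 • Matrix.diagonal (fun i => (lam i)⁻¹) + (2 * c) • 1 + Matrix.diagonal lam := by
    ext i j
    by_cases h : i = j
    · subst h
      simp [Matrix.diagonal_apply_eq, Matrix.one_apply_eq]
    · simp [Matrix.diagonal_apply_ne _ h, Matrix.one_apply_ne h]
  have hE : c ^ 2 • s⁻¹ + (2 * c) • (1 : Matrix (Fin n) (Fin n) ℝ) + s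
      = y * Matrix.diagonal (fun i => c ^ 2 * (lam i)⁻¹ + 2 * c + lam i) * yᵀ := by
    rw [hsinv, hsd, hdsum]
    simp only [Matrix.mul_add, Matrix.add_mul, Matrix.mul_smul, Matrix.smul_mul,
      Matrix.mul_one, hy']
  refine ⟨lam, hsd, ?_⟩
  constructor
  · rintro ⟨heq, hdet1⟩
    have h := hdiag.symm.trans (heq.trans hE)
    have h2 := hconj _ _ h
    have hμ : ∀ i, μ i = c ^ 2 * (lam i)⁻¹ + 2 * c + lam i := by
      intro i
      have h3 := congrFun (congrFun h2 i) i
      simpa [Matrix.diagonal_apply_eq] using h3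
    refine ⟨fun i => ?_, by rw [← hdets]; exact hdet1⟩
    have h5 := hμ i
    have hinv : (lam i)⁻¹ * lam i = 1 := inv_mul_cancel₀ (hlam0 i)
    linear_combination (-(lam i)) * h5 - c ^ 2 * hinv
  · rintro ⟨hsys, hprod⟩
    refine ⟨?_, by rw [hdets]; exact hprod⟩
    rw [hdiag, hE]
    have hfun : μ = fun i => c ^ 2 * (lam i)⁻¹ + 2 * c + lam i := by
      funext i
      have h5 := hsys i
      have h0 := hlam0 i
      field_simp
      linear_combination -h5
    rw [hfun]
end
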